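/- arXiv:2504.06930 — 4 statements merged into one kernel-verified Lean document; each statement's English description precedes it below -/
import Mathlib

section
/- Let 1/2 < ε < 1, N ≥ 3 an integer, and α = (N-2)/2. Then there exists a constant C > 0 (depending on ε and N) such that for all β ≥ 1, ∫_β^∞ e^{-αh} (1 + h^{(1-N)/2}) (cosh h − cosh β)^{α-ε} dh ≤ C (cosh β − 1)^{-ε}. -/
open MeasureTheory Real Set

private lemma cosh_diff_upper {β h : ℝ} (hβh : β ≤ h) :
    Real.cosh h - Real.cosh β ≤ (h - β) * Real.exp h := by
  have h1 : Real.exp (-h) ≤ Real.exp (-β) := Real.exp_le_exp.2 (by linarith)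
  have h3 : Real.exp (β - h) * Real.exp h = Real.exp β := by
    rw [← Real.exp_add]; ring_nf
  have h4 := Real.add_one_le_exp (β - h)
  have h5 : Real.exp h - Real.exp β ≤ (h - β) * Real.exp h := by
    nlinarith [Real.exp_pos h]
  rw [Real.cosh_eq, Real.cosh_eq]
  nlinarith [Real.exp_pos h]

private lemma cosh_diff_lower {β h : ℝ} (hβ : 1 ≤ β) (hβh : β ≤ h) :
    (1 - Real.exp (-2)) / 2 * (h - β) * Real.exp β ≤ Real.cosh h - Real.cosh β := by
  have e1 : Real.exp (h - β) * Real.exp β = Real.exp h := by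
    rw [← Real.exp_add]; ring_nf
  have e2 := Real.add_one_le_exp (h - β)
  -- exp h - exp β ≥ (h - β) * exp β
  have h1 : (h - β) * Real.exp β ≤ Real.exp h - Real.exp β := by nlinarith [Real.exp_pos β]
  -- exp (-β) - exp (-h) ≤ (h - β) * exp (-β)
  have e3 : Real.exp (β - h) * Real.exp (-β) = Real.exp (-h) := by
    rw [← Real.exp_add]; ring_nf
  have e4 := Real.add_one_le_exp (β - h)
  have h2 : Real.exp (-β) - Real.exp (-h) ≤ (h - β) * Real.exp (-β) := by
    nlinarith [Real.exp_pos (-β)]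
  -- exp (-β) ≤ exp (-2) * exp β
  have e5 : Real.exp (-β - β) * Real.exp β = Real.exp (-β) := by
    rw [← Real.exp_add]; ring_nf
  have h3 : Real.exp (-β) ≤ Real.exp (-2) * Real.exp β := by
    have : Real.exp (-β - β) ≤ Real.exp (-2) := Real.exp_le_exp.2 (by linarith)
    nlinarith [Real.exp_pos β]
  rw [Real.cosh_eq, Real.cosh_eq]
  nlinarith [Real.exp_pos β, Real.exp_pos (-β)]

private lemma pointwise_est {α ε β h : ℝ} (hα : 1 / 2 ≤ α) (hε1 : 1 / 2 < ε)
    (hε2 : ε < 1) (hβ : 1 ≤ β) (hh : β < h) :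
    Real.exp (-(α * h)) * (Real.cosh h - Real.cosh β) ^ (α - ε) ≤
      max 1 (((1 - Real.exp (-2)) / 2) ^ (α - ε)) *
        Real.exp (-(ε * β)) * ((h - β) ^ (α - ε) * Real.exp (-((h - β) / 2))) := by
  set c : ℝ := (1 - Real.exp (-2)) / 2 with hc_def
  have hc : 0 < c := by
    have : Real.exp (-2) < 1 := by
      rw [Real.exp_lt_one_iff]; norm_num
    simp only [hc_def]; linarith
  set p : ℝ := α - ε with hp_def
  set t : ℝ := h - β with ht_def
  have ht : 0 < t := by simp only [ht_def]; linarith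
  have hDlow : c * t * Real.exp β ≤ Real.cosh h - Real.cosh β := by
    simpa [hc_def, ht_def] using cosh_diff_lower hβ hh.le
  have hD : 0 ≤ Real.cosh h - Real.cosh β := by
    refine le_trans ?_ hDlow; positivity
  have htp : (0:ℝ) ≤ t ^ p := Real.rpow_nonneg ht.le p
  rcases le_or_gt 0 p with hp | hp
  · -- p ≥ 0 : use upper bound D ≤ t * exp h
    have h1 : (Real.cosh h - Real.cosh β) ^ p ≤ (t * Real.exp h) ^ p :=
      Real.rpow_le_rpow hD (by simpa [ht_def] using cosh_diff_upper hh.le) hp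
    have h2 : (t * Real.exp h) ^ p = t ^ p * Real.exp (h * p) := by
      rw [Real.mul_rpow ht.le (Real.exp_pos h).le, ← Real.exp_mul]
    have h3 : Real.exp (-(α * h)) * ((Real.cosh h - Real.cosh β) ^ p)
        ≤ t ^ p * (Real.exp (-(α * h)) * Real.exp (h * p)) := by
      rw [h2] at h1
      nlinarith [Real.exp_pos (-(α * h)), mul_le_mul_of_nonneg_left h1
        (Real.exp_pos (-(α * h))).le]
    have h4 : Real.exp (-(α * h)) * Real.exp (h * p) = Real.exp (-(ε * h)) := by
      rw [← Real.exp_add]; congr 1; simp only [hp_def]; ring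
    have h5 : Real.exp (-(ε * h)) ≤ Real.exp (-(ε * β)) * Real.exp (-(t / 2)) := by
      rw [← Real.exp_add, Real.exp_le_exp]
      have : ε * t ≥ t / 2 := by nlinarith
      simp only [ht_def] at this ⊢; nlinarith
    have h6 : (1:ℝ) ≤ max 1 (c ^ p) := le_max_left _ _
    calc Real.exp (-(α * h)) * (Real.cosh h - Real.cosh β) ^ p
        ≤ t ^ p * Real.exp (-(ε * h)) := by rw [← h4]; exact h3
      _ ≤ t ^ p * (Real.exp (-(ε * β)) * Real.exp (-(t / 2))) :=
          mul_le_mul_of_nonneg_left h5 htp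
      _ = 1 * Real.exp (-(ε * β)) * (t ^ p * Real.exp (-(t / 2))) := by ring
      _ ≤ max 1 (c ^ p) * Real.exp (-(ε * β)) * (t ^ p * Real.exp (-(t / 2))) := by
          have : (0:ℝ) ≤ Real.exp (-(ε * β)) * (t ^ p * Real.exp (-(t / 2))) := by positivity
          nlinarith
  · -- p < 0 : use lower bound D ≥ c * t * exp β
    have hDpos : 0 < c * t * Real.exp β := by positivity
    have h1 : (Real.cosh h - Real.cosh β) ^ p ≤ (c * t * Real.exp β) ^ p :=
      Real.rpow_le_rpow_of_nonpos hDpos hDlow hp.le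
    have h2 : (c * t * Real.exp β) ^ p = c ^ p * t ^ p * Real.exp (β * p) := by
      rw [Real.mul_rpow (by positivity) (Real.exp_pos β).le,
        Real.mul_rpow hc.le ht.le, ← Real.exp_mul]
    have h3 : Real.exp (-(α * h)) * Real.exp (β * p) ≤
        Real.exp (-(ε * β)) * Real.exp (-(t / 2)) := by
      rw [← Real.exp_add, ← Real.exp_add, Real.exp_le_exp]
      have hht : h = β + t := by simp [ht_def]
      simp only [hp_def, ht_def]
      nlinarith
    have hcp : (0:ℝ) ≤ c ^ p := Real.rpow_nonneg hc.le p
    calc Real.exp (-(α * h)) * (Real.cosh h - Real.cosh β) ^ p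
        ≤ Real.exp (-(α * h)) * (c ^ p * t ^ p * Real.exp (β * p)) := by
          rw [h2] at h1
          exact mul_le_mul_of_nonneg_left h1 (Real.exp_pos _).le
      _ = c ^ p * (t ^ p * (Real.exp (-(α * h)) * Real.exp (β * p))) := by ring
      _ ≤ c ^ p * (t ^ p * (Real.exp (-(ε * β)) * Real.exp (-(t / 2)))) := by
          refine mul_le_mul_of_nonneg_left (mul_le_mul_of_nonneg_left h3 htp) hcp
      _ = c ^ p * Real.exp (-(ε * β)) * (t ^ p * Real.exp (-(t / 2))) := by ring
      _ ≤ max 1 (c ^ p) * Real.exp (-(ε * β)) * (t ^ p * Real.exp (-(t / 2))) := by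
          have h6 : c ^ p ≤ max 1 (c ^ p) := le_max_right _ _
          have : (0:ℝ) ≤ Real.exp (-(ε * β)) * (t ^ p * Real.exp (-(t / 2))) := by positivity
          nlinarith

set_option maxHeartbeats 1000000 in
theorem tail_integral_estimate_large_beta (N : ℕ) (hN : 3 ≤ N) (ε : ℝ)
    (hε1 : 1 / 2 < ε) (hε2 : ε < 1) (α : ℝ) (hα : α = ((N : ℝ) - 2) / 2) :
    ∃ C > 0, ∀ β : ℝ, 1 ≤ β →
      (∫ h in Ioi β,
          Real.exp (-(α * h)) * (1 + h ^ (((1 : ℝ) - N) / 2)) *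
            (Real.cosh h - Real.cosh β) ^ (α - ε))
        ≤ C * (Real.cosh β - 1) ^ (-ε) := by
  have hN3 : (3:ℝ) ≤ (N:ℝ) := by exact_mod_cast hN
  have hα' : 1 / 2 ≤ α := by rw [hα]; linarith
  set p : ℝ := α - ε with hp_def
  have hp1 : -1 < p := by simp only [hp_def]; linarith
  set c : ℝ := (1 - Real.exp (-2)) / 2 with hc_def
  have hc : 0 < c := by
    have : Real.exp (-2) < 1 := by rw [Real.exp_lt_one_iff]; norm_num
    simp only [hc_def]; linarith
  set K : ℝ := 2 * max 1 (c ^ p) with hK_def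
  have hK : 0 < K := by
    have : (1:ℝ) ≤ max 1 (c ^ p) := le_max_left _ _
    simp only [hK_def]; linarith
  -- base integrability
  have base : IntegrableOn (fun t : ℝ => t ^ p * Real.exp (-(t / 2))) (Ioi 0) := by
    have h0 := integrableOn_rpow_mul_exp_neg_mul_rpow (p := 1) (s := p) (b := 1/2) hp1
      (by norm_num) (by norm_num)
    refine h0.congr_fun (fun x _ => ?_) measurableSet_Ioi
    beta_reduce; rw [Real.rpow_one]; ring_nf
  set I0 : ℝ := ∫ t in Ioi (0:ℝ), t ^ p * Real.exp (-(t / 2)) with hI0_def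
  have hI0 : 0 ≤ I0 := by
    refine setIntegral_nonneg measurableSet_Ioi (fun t ht => ?_)
    have := le_of_lt (show (0:ℝ) < t from ht)
    positivity
  refine ⟨K * (I0 + 1), by positivity, fun β hβ => ?_⟩
  -- translation preliminaries
  have hme : MeasurableEmbedding (fun x : ℝ => x + β) :=
    (MeasurableEquiv.addRight β).measurableEmbedding
  have hmp : MeasurePreserving (fun x : ℝ => x + β) volume volume :=
    measurePreserving_add_right volume β
  have hpre : (fun x : ℝ => x + β) ⁻¹' (Ioi β) = Ioi 0 := by
    ext x; simp
  set F : ℝ → ℝ := fun h => (h - β) ^ p * Real.exp (-((h - β) / 2)) with hF_def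
  have hcomp : ∀ x ∈ Ioi (0:ℝ), (F ∘ (fun x : ℝ => x + β)) x = x ^ p * Real.exp (-(x / 2)) := by
    intro x _; simp [hF_def]
  have hFint : IntegrableOn F (Ioi β) := by
    refine (hmp.integrableOn_comp_preimage hme (s := Ioi β)).1 ?_
    rw [hpre]
    exact base.congr_fun (fun x hx => (hcomp x hx).symm) measurableSet_Ioi
  have hFval : ∫ h in Ioi β, F h = I0 := by
    rw [← hmp.setIntegral_preimage_emb hme F (Ioi β), hpre, hI0_def]
    exact setIntegral_congr_fun measurableSet_Ioi hcomp
  -- domination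
  set g : ℝ → ℝ := fun h => (K * Real.exp (-(ε * β))) * F h with hg_def
  have hgint : IntegrableOn g (Ioi β) := hFint.const_mul _
  have hmono : (∫ h in Ioi β,
      Real.exp (-(α * h)) * (1 + h ^ (((1 : ℝ) - N) / 2)) *
        (Real.cosh h - Real.cosh β) ^ (α - ε)) ≤ ∫ h in Ioi β, g h := by
    refine integral_mono_of_nonneg ?_ hgint ?_
    · filter_upwards [ae_restrict_mem measurableSet_Ioi] with h hh
      have hh1 : (1:ℝ) ≤ h := le_trans hβ (le_of_lt hh)
      have hD : 0 ≤ Real.cosh h - Real.cosh β := by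
        have := cosh_diff_lower hβ (le_of_lt hh)
        have h0 : 0 ≤ (1 - Real.exp (-2)) / 2 * (h - β) * Real.exp β :=
          mul_nonneg (mul_nonneg hc.le (by linarith [hh.out])) (Real.exp_pos β).le
        linarith
      have hq : (0:ℝ) ≤ h ^ (((1 : ℝ) - N) / 2) := Real.rpow_nonneg (by linarith) _
      have hDp := Real.rpow_nonneg hD (α - ε)
      have h0 : (0:ℝ) ≤ Real.exp (-(α * h)) * (1 + h ^ (((1 : ℝ) - N) / 2)) :=
        mul_nonneg (Real.exp_pos _).le (by linarith)
      exact mul_nonneg h0 hDp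
    · filter_upwards [ae_restrict_mem measurableSet_Ioi] with h hh
      have hh' : β < h := hh
      have hh1 : (1:ℝ) ≤ h := le_trans hβ hh'.le
      have hq : h ^ (((1 : ℝ) - N) / 2) ≤ 1 := by
        apply Real.rpow_le_one_of_one_le_of_nonpos hh1
        linarith
      have hq0 : (0:ℝ) ≤ h ^ (((1 : ℝ) - N) / 2) := Real.rpow_nonneg (by linarith) _
      have hD : 0 ≤ Real.cosh h - Real.cosh β := by
        have := cosh_diff_lower hβ hh'.le
        have h0 : 0 ≤ (1 - Real.exp (-2)) / 2 * (h - β) * Real.exp β :=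
          mul_nonneg (mul_nonneg hc.le (by linarith)) (Real.exp_pos β).le
        linarith
      have hDp : (0:ℝ) ≤ (Real.cosh h - Real.cosh β) ^ (α - ε) := Real.rpow_nonneg hD _
      have key := pointwise_est hα' hε1 hε2 hβ hh'
      have step1 : Real.exp (-(α * h)) * (1 + h ^ (((1 : ℝ) - N) / 2)) *
          (Real.cosh h - Real.cosh β) ^ (α - ε) ≤
          2 * (Real.exp (-(α * h)) * (Real.cosh h - Real.cosh β) ^ (α - ε)) := by
        nlinarith [Real.exp_pos (-(α * h)), mul_nonneg (Real.exp_pos (-(α * h))).le hDp]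
      calc Real.exp (-(α * h)) * (1 + h ^ (((1 : ℝ) - N) / 2)) *
          (Real.cosh h - Real.cosh β) ^ (α - ε)
          ≤ 2 * (Real.exp (-(α * h)) * (Real.cosh h - Real.cosh β) ^ (α - ε)) := step1
        _ ≤ 2 * (max 1 (c ^ p) * Real.exp (-(ε * β)) *
              ((h - β) ^ p * Real.exp (-((h - β) / 2)))) := by
            simp only [hp_def, hc_def] at key ⊢
            linarith [key]
        _ = g h := by simp only [hg_def, hK_def, hF_def]; ring
  have hgval : ∫ h in Ioi β, g h = K * Real.exp (-(ε * β)) * I0 := by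
    rw [hg_def]
    rw [integral_const_mul, hFval]
  -- final comparison
  have hcosh1 : 0 < Real.cosh β - 1 := by
    have h2 : (2:ℝ) ≤ Real.exp β := by
      have := Real.add_one_le_exp β; linarith
    have h3 : Real.exp β * Real.exp (-β) = 1 := by
      rw [← Real.exp_add]; simp
    rw [Real.cosh_eq]
    nlinarith [Real.exp_pos (-β)]
  have hcosh2 : Real.cosh β - 1 ≤ Real.exp β := by
    have : Real.exp (-β) ≤ 1 := Real.exp_le_one_iff.2 (by linarith)
    rw [Real.cosh_eq]
    nlinarith [Real.exp_pos β]
  have hfin : Real.exp (-(ε * β)) ≤ (Real.cosh β - 1) ^ (-ε) := by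
    have h1 : (Real.exp β) ^ (-ε) ≤ (Real.cosh β - 1) ^ (-ε) :=
      Real.rpow_le_rpow_of_nonpos hcosh1 hcosh2 (by linarith)
    have h2 : (Real.exp β) ^ (-ε) = Real.exp (-(ε * β)) := by
      rw [← Real.exp_mul]; ring_nf
    linarith [h1, h2.symm.le]
  calc (∫ h in Ioi β,
      Real.exp (-(α * h)) * (1 + h ^ (((1 : ℝ) - N) / 2)) *
        (Real.cosh h - Real.cosh β) ^ (α - ε))
      ≤ ∫ h in Ioi β, g h := hmono
    _ = K * Real.exp (-(ε * β)) * I0 := hgval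
    _ ≤ K * (I0 + 1) * Real.exp (-(ε * β)) := by
        have he : (0:ℝ) < Real.exp (-(ε * β)) := Real.exp_pos _
        nlinarith
    _ ≤ K * (I0 + 1) * (Real.cosh β - 1) ^ (-ε) := by
        have : (0:ℝ) ≤ K * (I0 + 1) := by positivity
        nlinarith [hfin]
end

section
/- Let 1/2 < ε < 1, N ≥ 3 an integer, and α = (N-2)/2. Then there exists a constant C > 0 (depending on ε and N) such that for all 0 < β < 1, ∫_{2β}^{1+β} e^{-αh} (1 + h^{(1-N)/2}) (cosh h − cosh β)^{α-ε} dh ≤ C (cosh β − 1)^{-ε}. -/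
open MeasureTheory Real Set

private lemma exp_le_quad {x : ℝ} (h0 : 0 ≤ x) (h1 : x ≤ 1) :
    Real.exp x ≤ 1 + x + (3 / 4) * x ^ 2 := by
  have h := Real.exp_bound' h0 h1 (n := 2) (by norm_num)
  norm_num [Finset.sum_range_succ] at h
  nlinarith [h]

private lemma exp_neg_le_quad {x : ℝ} (h0 : 0 ≤ x) :
    Real.exp (-x) ≤ 1 - x + x ^ 2 := by
  have h1 : 1 + x ≤ Real.exp x := by linarith [Real.add_one_le_exp x]
  have hmul : Real.exp (-x) * Real.exp x = 1 := by
    rw [← Real.exp_add]; simp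
  have hp : (0:ℝ) < Real.exp (-x) := Real.exp_pos _
  nlinarith [mul_le_mul_of_nonneg_left h1 hp.le]

private lemma cosh_ge_quad {x : ℝ} (h0 : 0 ≤ x) (h2 : x ≤ 2) :
    1 + x ^ 2 / 4 ≤ Real.cosh x := by
  rw [Real.cosh_eq]
  have e1 : Real.exp (x / 2) ^ 2 = Real.exp x := by
    rw [sq, ← Real.exp_add]; ring_nf
  have e2 : Real.exp (-(x / 2)) ^ 2 = Real.exp (-x) := by
    rw [sq, ← Real.exp_add]; ring_nf
  have b1 : 1 + x / 2 ≤ Real.exp (x / 2) := by linarith [Real.add_one_le_exp (x / 2)]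
  have b2 : 1 - x / 2 ≤ Real.exp (-(x / 2)) := by linarith [Real.add_one_le_exp (-(x / 2))]
  have hx2 : (0:ℝ) ≤ 1 - x / 2 := by linarith
  nlinarith [mul_self_le_mul_self (by linarith : (0:ℝ) ≤ 1 + x / 2) b1,
    mul_self_le_mul_self hx2 b2, sq_nonneg (Real.exp (-(x/2)))]

private lemma cosh_le_quad {x : ℝ} (h0 : 0 ≤ x) (h1 : x ≤ 1) :
    Real.cosh x ≤ 1 + (7 / 8) * x ^ 2 := by
  rw [Real.cosh_eq]
  have := exp_le_quad h0 h1
  have := exp_neg_le_quad h0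
  nlinarith

private lemma cosh_le_big {x : ℝ} (h0 : 0 ≤ x) (h2 : x ≤ 2) :
    Real.cosh x ≤ 1 + 2 * x ^ 2 := by
  rw [Real.cosh_eq]
  have e1 : Real.exp (x / 2) ^ 2 = Real.exp x := by
    rw [sq, ← Real.exp_add]; ring_nf
  have b1 : Real.exp (x / 2) ≤ 1 + x / 2 + (3 / 4) * (x / 2) ^ 2 :=
    exp_le_quad (by linarith) (by linarith)
  have b2 : Real.exp (-x) ≤ 1 - x + x ^ 2 := exp_neg_le_quad h0
  have key : Real.exp x ≤ (1 + x / 2 + (3 / 4) * (x / 2) ^ 2) ^ 2 := by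
    rw [← e1]; exact pow_le_pow_left₀ (Real.exp_pos _).le b1 2
  nlinarith [key, b2, sq_nonneg x, mul_nonneg (mul_nonneg h0 h0) h0,
    mul_le_mul_of_nonneg_left h2 (mul_nonneg (mul_nonneg h0 h0) h0),
    mul_le_mul_of_nonneg_left h2 (mul_nonneg h0 h0)]

set_option maxHeartbeats 1600000 in
theorem middle_integral_estimate_small_beta_F2 (N : ℕ) (hN : 3 ≤ N) (ε : ℝ)
    (hε1 : 1 / 2 < ε) (hε2 : ε < 1) (α : ℝ) (hα : α = ((N : ℝ) - 2) / 2) :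
    ∃ C > 0, ∀ β : ℝ, 0 < β → β < 1 →
      (∫ h in Ioc (2 * β) (1 + β),
          Real.exp (-(α * h)) * (1 + h ^ (((1 : ℝ) - N) / 2)) *
            (Real.cosh h - Real.cosh β) ^ (α - ε))
        ≤ C * (Real.cosh β - 1) ^ (-ε) := by
  have hN3 : (3 : ℝ) ≤ (N : ℝ) := by exact_mod_cast hN
  have hαpos : 0 < α := by rw [hα]; linarith
  set p : ℝ := ((1 : ℝ) - N) / 2 with hp
  have hpneg : p ≤ 0 := by rw [hp]; linarith
  set M : ℝ := (2 : ℝ) ^ (α - ε) + (32 : ℝ) ^ (ε - α) with hM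
  have hMpos : 0 < M := by positivity
  set c1 : ℝ := 1 + (2 : ℝ) ^ (((N : ℝ) - 1) / 2) with hc1
  have hc1pos : 0 < c1 := by positivity
  set K : ℝ := c1 * M * (2 : ℝ) ^ (((N : ℝ) - 3) / 2) with hK
  have hKpos : 0 < K := by positivity
  have h2e : (0 : ℝ) < 2 * ε - 1 := by linarith
  refine ⟨2 * K / (2 * ε - 1), by positivity, fun β hβ0 hβ1 => ?_⟩
  have hab : 2 * β ≤ 1 + β := by linarith
  -- pointwise bound on the integrand
  have hpoint : ∀ h ∈ Ioc (2 * β) (1 + β),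
      Real.exp (-(α * h)) * (1 + h ^ p) * (Real.cosh h - Real.cosh β) ^ (α - ε)
        ≤ K * h ^ (-(2 * ε)) := by
    intro h hh
    obtain ⟨hh1, hh2⟩ := hh
    have hhpos : 0 < h := by linarith
    have hh2' : h ≤ 2 := by linarith
    have hβh : β ≤ h / 2 := by linarith
    -- bounds on cosh h - cosh β
    have hub : Real.cosh h - Real.cosh β ≤ 2 * h ^ 2 := by
      have := cosh_le_big hhpos.le hh2'
      have := Real.one_le_cosh β
      linarith
    have hlb : h ^ 2 / 32 ≤ Real.cosh h - Real.cosh β := by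
      have hc1' := cosh_ge_quad hhpos.le hh2'
      have hc2' := cosh_le_quad hβ0.le hβ1.le
      nlinarith [sq_nonneg h, sq_nonneg β, mul_self_le_mul_self hβ0.le hβh]
    have hbasepos : 0 < Real.cosh h - Real.cosh β := lt_of_lt_of_le (by positivity) hlb
    -- exp factor
    have e1 : Real.exp (-(α * h)) ≤ 1 := by
      rw [show (1 : ℝ) = Real.exp 0 by simp]
      exact Real.exp_le_exp.mpr (by nlinarith)
    -- 1 + h^p factor
    have e2 : 1 + h ^ p ≤ c1 * h ^ p := by
      have h2p : (2 : ℝ) ^ p ≤ h ^ p :=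
        Real.rpow_le_rpow_of_nonpos hhpos hh2' hpneg
      have hone : (1 : ℝ) ≤ (2 : ℝ) ^ (((N : ℝ) - 1) / 2) * h ^ p := by
        calc (1 : ℝ) = (2 : ℝ) ^ (((N : ℝ) - 1) / 2) * (2 : ℝ) ^ p := by
              rw [← Real.rpow_add (by norm_num : (0:ℝ) < 2)]
              rw [show ((N : ℝ) - 1) / 2 + p = 0 by rw [hp]; ring]
              simp
          _ ≤ (2 : ℝ) ^ (((N : ℝ) - 1) / 2) * h ^ p := by
              exact mul_le_mul_of_nonneg_left h2p (by positivity)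
      rw [hc1]; nlinarith [Real.rpow_nonneg hhpos.le p]
    -- cosh power factor
    have hsq : (h ^ 2 : ℝ) ^ (α - ε) = h ^ (2 * (α - ε)) := by
      rw [← Real.rpow_natCast h 2, ← Real.rpow_mul hhpos.le]
      norm_num
    have e3 : (Real.cosh h - Real.cosh β) ^ (α - ε) ≤ M * h ^ (2 * (α - ε)) := by
      rcases le_total ε α with hcase | hcase
      · calc (Real.cosh h - Real.cosh β) ^ (α - ε)
            ≤ (2 * h ^ 2) ^ (α - ε) :=
              Real.rpow_le_rpow hbasepos.le hub (by linarith)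
          _ = (2 : ℝ) ^ (α - ε) * (h ^ 2) ^ (α - ε) :=
              Real.mul_rpow (by norm_num) (by positivity)
          _ ≤ M * h ^ (2 * (α - ε)) := by
              rw [hsq]
              exact mul_le_mul_of_nonneg_right (le_add_of_nonneg_right (by positivity))
                (Real.rpow_nonneg hhpos.le _)
      · calc (Real.cosh h - Real.cosh β) ^ (α - ε)
            ≤ (h ^ 2 / 32) ^ (α - ε) :=
              Real.rpow_le_rpow_of_nonpos (by positivity) hlb (by linarith)
          _ = (h ^ 2) ^ (α - ε) * (32 : ℝ) ^ (ε - α) := by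
              rw [Real.div_rpow (by positivity) (by norm_num), div_eq_mul_inv,
                ← Real.rpow_neg (by norm_num : (0:ℝ) ≤ 32), neg_sub]
          _ ≤ M * h ^ (2 * (α - ε)) := by
              rw [hsq, mul_comm]
              exact mul_le_mul_of_nonneg_right (le_add_of_nonneg_left (by positivity))
                (Real.rpow_nonneg hhpos.le _)
    -- combine
    have hfnonneg : (0:ℝ) ≤ 1 + h ^ p := by positivity
    calc Real.exp (-(α * h)) * (1 + h ^ p) * (Real.cosh h - Real.cosh β) ^ (α - ε)
        ≤ 1 * (c1 * h ^ p) * (M * h ^ (2 * (α - ε))) := by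
          apply mul_le_mul
          · apply mul_le_mul e1 e2 hfnonneg (by norm_num)
          · exact e3
          · exact Real.rpow_nonneg hbasepos.le _
          · positivity
      _ = c1 * M * (h ^ p * h ^ (2 * (α - ε))) := by ring
      _ = c1 * M * h ^ (((N : ℝ) - 3) / 2 + -(2 * ε)) := by
          rw [← Real.rpow_add hhpos]
          congr 1
          rw [hp, hα]; ring
      _ = c1 * M * (h ^ (((N : ℝ) - 3) / 2) * h ^ (-(2 * ε))) := by
          rw [← Real.rpow_add hhpos]
      _ ≤ c1 * M * ((2 : ℝ) ^ (((N : ℝ) - 3) / 2) * h ^ (-(2 * ε))) := by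
          apply mul_le_mul_of_nonneg_left _ (by positivity)
          apply mul_le_mul_of_nonneg_right _ (Real.rpow_nonneg hhpos.le _)
          exact Real.rpow_le_rpow hhpos.le hh2' (by linarith)
      _ = K * h ^ (-(2 * ε)) := by rw [hK]; ring
  -- integrability of the dominating function
  have hgint : IntegrableOn (fun h : ℝ => K * h ^ (-(2 * ε))) (Ioc (2 * β) (1 + β)) volume := by
    have hcont : ContinuousOn (fun h : ℝ => h ^ (-(2 * ε))) (Icc (2 * β) (1 + β)) := by
      intro x hx
      have hxpos : 0 < x := lt_of_lt_of_le (by linarith) hx.1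
      exact (Real.continuousAt_rpow_const x _ (Or.inl hxpos.ne')).continuousWithinAt
    exact ((hcont.integrableOn_Icc).mono_set Ioc_subset_Icc_self).const_mul K
  -- compare integrals
  have hmono :
      (∫ h in Ioc (2 * β) (1 + β),
          Real.exp (-(α * h)) * (1 + h ^ p) * (Real.cosh h - Real.cosh β) ^ (α - ε))
        ≤ ∫ h in Ioc (2 * β) (1 + β), K * h ^ (-(2 * ε)) := by
    apply MeasureTheory.integral_mono_of_nonneg
    · filter_upwards [MeasureTheory.ae_restrict_mem measurableSet_Ioc] with x hx
      have hxpos : 0 < x := by have := hx.1; linarith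
      have hβx : β < x := by have := hx.1; linarith
      have : 0 < Real.cosh x - Real.cosh β := by
        rw [sub_pos]
        exact Real.cosh_lt_cosh.mpr (by rw [abs_of_pos hβ0, abs_of_pos hxpos]; exact hβx)
      have : (0:ℝ) ≤ (Real.cosh x - Real.cosh β) ^ (α - ε) := Real.rpow_nonneg this.le _
      positivity
    · exact hgint
    · filter_upwards [MeasureTheory.ae_restrict_mem measurableSet_Ioc] with x hx
      exact hpoint x hx
  -- compute the integral of the dominating function
  have hval : (∫ h in Ioc (2 * β) (1 + β), K * h ^ (-(2 * ε)))
      = K * (((1 + β) ^ (-(2 * ε) + 1) - (2 * β) ^ (-(2 * ε) + 1)) / (-(2 * ε) + 1)) := by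
    rw [MeasureTheory.integral_const_mul, ← intervalIntegral.integral_of_le hab,
      integral_rpow]
    right
    constructor
    · intro hcon; rw [neg_eq_iff_eq_neg] at hcon; linarith
    · exact Set.notMem_uIcc_of_lt (by linarith) (by linarith)
  have hA : (0:ℝ) < (2 * β) ^ (-(2 * ε) + 1) := Real.rpow_pos_of_pos (by linarith) _
  have hB : (0:ℝ) < (1 + β) ^ (-(2 * ε) + 1) := Real.rpow_pos_of_pos (by linarith) _
  have hcoshpos : 0 < Real.cosh β - 1 := by
    rw [sub_pos]; exact Real.one_lt_cosh.mpr hβ0.ne'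
  -- bound (2β)^(1-2ε) by 2 * (cosh β - 1)^(-ε)
  have hfinal : (2 * β) ^ (-(2 * ε) + 1) ≤ 2 * (Real.cosh β - 1) ^ (-ε) := by
    have step1 : (2 * β) ^ (-(2 * ε) + 1) = (2 * β) ^ (-(2 * ε)) * (2 * β) := by
      rw [Real.rpow_add (by linarith), Real.rpow_one]
    have step2 : (2 * β) ^ (-(2 * ε)) = ((2 * β) ^ 2 : ℝ) ^ (-ε) := by
      rw [← Real.rpow_natCast (2 * β) 2, ← Real.rpow_mul (by linarith)]
      norm_num
    have step3 : ((2 * β) ^ 2 : ℝ) ^ (-ε) ≤ (Real.cosh β - 1) ^ (-ε) := by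
      apply Real.rpow_le_rpow_of_nonpos hcoshpos _ (by linarith)
      have := cosh_le_quad hβ0.le hβ1.le
      nlinarith [sq_nonneg β]
    calc (2 * β) ^ (-(2 * ε) + 1) = ((2 * β) ^ 2 : ℝ) ^ (-ε) * (2 * β) := by
          rw [step1, step2]
      _ ≤ (Real.cosh β - 1) ^ (-ε) * 2 := by
          apply mul_le_mul step3 (by linarith) (by linarith) (Real.rpow_nonneg hcoshpos.le _)
      _ = 2 * (Real.cosh β - 1) ^ (-ε) := by ring
  calc (∫ h in Ioc (2 * β) (1 + β),
          Real.exp (-(α * h)) * (1 + h ^ p) * (Real.cosh h - Real.cosh β) ^ (α - ε))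
      ≤ K * (((1 + β) ^ (-(2 * ε) + 1) - (2 * β) ^ (-(2 * ε) + 1)) / (-(2 * ε) + 1)) := by
        rw [← hval]; exact hmono
    _ = K * (((2 * β) ^ (-(2 * ε) + 1) - (1 + β) ^ (-(2 * ε) + 1)) / (2 * ε - 1)) := by
        congr 1
        rw [show (-(2 * ε) + 1 : ℝ) = -(2 * ε - 1) by ring, div_neg, ← neg_div, neg_sub]
    _ ≤ K * ((2 * β) ^ (-(2 * ε) + 1) / (2 * ε - 1)) := by
        gcongr
        linarith
    _ ≤ K * (2 * (Real.cosh β - 1) ^ (-ε) / (2 * ε - 1)) := by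
        gcongr
    _ = 2 * K / (2 * ε - 1) * (Real.cosh β - 1) ^ (-ε) := by ring
end

section
/- Let 1/2 < ε < 1, N ≥ 3 an integer, and α = (N-2)/2. Then there exists a constant C > 0 (depending on ε and N) such that for all 0 < β < 1, ∫_β^{2β} e^{-αh} (1 + h^{(1-N)/2}) (cosh h − cosh β)^{α-ε} dh ≤ C (cosh β − 1)^{-ε}. -/
open MeasureTheory Real Set

private lemma my_cosh_sub_cosh (a b : ℝ) :
    Real.cosh a - Real.cosh b = 2 * Real.sinh ((a+b)/2) * Real.sinh ((a-b)/2) := by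
  have h1 := Real.cosh_add ((a+b)/2) ((a-b)/2)
  have h2 := Real.cosh_sub ((a+b)/2) ((a-b)/2)
  have e1 : (a+b)/2 + (a-b)/2 = a := by ring
  have e2 : (a+b)/2 - (a-b)/2 = b := by ring
  rw [e1] at h1; rw [e2] at h2; linarith

private lemma my_sinh_le_mul_exp {x : ℝ} (hx : 0 ≤ x) :
    Real.sinh x ≤ x * Real.exp x := by
  rw [Real.sinh_eq]
  have h1 : -(2*x) + 1 ≤ Real.exp (-(2*x)) := Real.add_one_le_exp _
  have he : Real.exp (-x) = Real.exp x * Real.exp (-(2*x)) := by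
    rw [← Real.exp_add]; ring_nf
  rw [he]
  nlinarith [Real.exp_pos x]

set_option maxHeartbeats 1600000

theorem near_integral_estimate_small_beta_F1 (N : ℕ) (hN : 3 ≤ N) (ε : ℝ)
    (hε1 : 1 / 2 < ε) (hε2 : ε < 1) (α : ℝ) (hα : α = ((N : ℝ) - 2) / 2) :
    ∃ C > 0, ∀ β : ℝ, 0 < β → β < 1 →
      (∫ h in Ioc β (2 * β),
          Real.exp (-(α * h)) * (1 + h ^ (((1 : ℝ) - N) / 2)) *
            (Real.cosh h - Real.cosh β) ^ (α - ε))
        ≤ C * (Real.cosh β - 1) ^ (-ε) := by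
  have hN3 : (3 : ℝ) ≤ (N : ℝ) := by exact_mod_cast hN
  set p : ℝ := α - ε with hp_def
  set q : ℝ := ((1 : ℝ) - N) / 2 with hq_def
  have hα2 : (1:ℝ)/2 ≤ α := by rw [hα]; linarith
  have hp1 : 0 < p + 1 := by simp only [hp_def]; linarith
  have hpneg1 : (-1 : ℝ) < p := by linarith
  have hq0 : q ≤ 0 := by simp only [hq_def]; linarith
  set M : ℝ := (3/2) * Real.exp 2 with hM_def
  have hM1 : 1 ≤ M := by
    have := Real.one_le_exp (by norm_num : (0:ℝ) ≤ 2)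
    simp only [hM_def]; nlinarith
  set K : ℝ := max 1 (M ^ p) with hK_def
  have hK1 : 1 ≤ K := le_max_left _ _
  have hK0 : 0 < K := lt_of_lt_of_le one_pos hK1
  refine ⟨K * Real.exp 2 / (p + 1),
    div_pos (mul_pos hK0 (Real.exp_pos 2)) hp1, ?_⟩
  intro β hβ0 hβ1
  have hββ : β ≤ 2 * β := by linarith
  -- the dominating function
  set D : ℝ := 2 * K * (β ^ q * β ^ p) with hD_def
  have hD0 : 0 ≤ D := by
    have : (0:ℝ) ≤ β ^ q := Real.rpow_nonneg hβ0.le _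
    have : (0:ℝ) ≤ β ^ p := Real.rpow_nonneg hβ0.le _
    positivity
  -- integrability of the dominating function
  have hInt : IntegrableOn (fun h : ℝ => D * (h - β) ^ p) (Ioc β (2*β)) volume := by
    have h1 : IntervalIntegrable (fun x : ℝ => x ^ p) volume (β - β) (2*β - β) :=
      intervalIntegral.intervalIntegrable_rpow' hpneg1
    have h2 := (h1.comp_sub_right β)
    simp only [sub_add_cancel] at h2
    have h3 : IntegrableOn (fun h : ℝ => (h - β) ^ p) (Ioc β (2*β)) volume := by
      rw [← intervalIntegrable_iff_integrableOn_Ioc_of_le hββ]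
      exact h2
    exact h3.const_mul D
  -- pointwise bound
  have hbound : ∀ h ∈ Ioc β (2*β),
      Real.exp (-(α * h)) * (1 + h ^ q) * (Real.cosh h - Real.cosh β) ^ p
        ≤ D * (h - β) ^ p := by
    intro h hh
    obtain ⟨hh1, hh2⟩ := hh
    have hh0 : 0 < h := lt_trans hβ0 hh1
    have hhb : 0 < h - β := by linarith
    -- cosh estimates
    have hcosh_eq := my_cosh_sub_cosh h β
    have hs1 : 0 < (h + β)/2 := by linarith
    have hs2 : 0 < (h - β)/2 := by linarith
    have hlow : β * (h - β) ≤ Real.cosh h - Real.cosh β := by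
      rw [hcosh_eq]
      have l1 : (h + β)/2 ≤ Real.sinh ((h + β)/2) := Real.self_le_sinh_iff.mpr hs1.le
      have l2 : (h - β)/2 ≤ Real.sinh ((h - β)/2) := Real.self_le_sinh_iff.mpr hs2.le
      nlinarith
    have hcosh_pos : 0 < Real.cosh h - Real.cosh β := lt_of_lt_of_le (by positivity) hlow
    have hhigh : Real.cosh h - Real.cosh β ≤ M * (β * (h - β)) := by
      rw [hcosh_eq]
      have u1 : Real.sinh ((h + β)/2) ≤ ((h+β)/2) * Real.exp ((h+β)/2) :=
        my_sinh_le_mul_exp hs1.le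
      have u2 : Real.sinh ((h - β)/2) ≤ ((h-β)/2) * Real.exp ((h-β)/2) :=
        my_sinh_le_mul_exp hs2.le
      have e1 : Real.exp ((h+β)/2) ≤ Real.exp 2 := by
        apply Real.exp_le_exp.mpr; linarith
      have e2 : Real.exp ((h-β)/2) ≤ Real.exp 2 := by
        apply Real.exp_le_exp.mpr; linarith
      have s1n : 0 ≤ Real.sinh ((h + β)/2) := Real.sinh_nonneg_iff.mpr hs1.le
      have s2n : 0 ≤ Real.sinh ((h - β)/2) := Real.sinh_nonneg_iff.mpr hs2.le
      have ep : (0:ℝ) < Real.exp 2 := Real.exp_pos _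
      have hee : Real.exp ((h+β)/2) * Real.exp ((h-β)/2) = Real.exp h := by
        rw [← Real.exp_add]; ring_nf
      have key1 : Real.sinh ((h + β)/2) * Real.sinh ((h - β)/2)
          ≤ ((h+β)/2) * ((h-β)/2) * Real.exp h := by
        calc Real.sinh ((h + β)/2) * Real.sinh ((h - β)/2)
            ≤ (((h+β)/2) * Real.exp ((h+β)/2)) * (((h-β)/2) * Real.exp ((h-β)/2)) :=
              mul_le_mul u1 u2 s2n (by positivity)
          _ = ((h+β)/2) * ((h-β)/2) * (Real.exp ((h+β)/2) * Real.exp ((h-β)/2)) := by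
              ring
          _ = ((h+β)/2) * ((h-β)/2) * Real.exp h := by rw [hee]
      have eh : Real.exp h ≤ Real.exp 2 := Real.exp_le_exp.mpr (by linarith)
      have hint1 : ((h+β)/2) * ((h-β)/2) * Real.exp h
          ≤ ((h+β)/2) * ((h-β)/2) * Real.exp 2 :=
        mul_le_mul_of_nonneg_left eh (by positivity)
      have hint2 : (h+β)*(h-β) * Real.exp 2 ≤ 3*β*(h-β) * Real.exp 2 :=
        mul_le_mul_of_nonneg_right
          (mul_le_mul_of_nonneg_right (by linarith) hhb.le) ep.le
      simp only [hM_def]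
      linarith
    -- rpow of cosh difference
    have hrpow : (Real.cosh h - Real.cosh β) ^ p ≤ K * (β * (h - β)) ^ p := by
      rcases le_or_gt 0 p with hp0 | hp0
      · calc (Real.cosh h - Real.cosh β) ^ p ≤ (M * (β * (h - β))) ^ p :=
              Real.rpow_le_rpow hcosh_pos.le hhigh hp0
          _ = M ^ p * (β * (h - β)) ^ p := Real.mul_rpow (by linarith) (by positivity)
          _ ≤ K * (β * (h - β)) ^ p := by
              apply mul_le_mul_of_nonneg_right (le_max_right _ _) (by positivity)
      · calc (Real.cosh h - Real.cosh β) ^ p ≤ (β * (h - β)) ^ p :=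
              Real.rpow_le_rpow_of_nonpos (by positivity) hlow hp0.le
          _ ≤ K * (β * (h - β)) ^ p := by
              nlinarith [Real.rpow_nonneg (show (0:ℝ) ≤ β * (h-β) by positivity) p]
    -- exp and power factor
    have hexp : Real.exp (-(α * h)) ≤ 1 :=
      Real.exp_le_one_iff.mpr
        (neg_nonpos.mpr (mul_nonneg (by linarith) hh0.le))
    have hfac : 1 + h ^ q ≤ 2 * β ^ q := by
      have f1 : h ^ q ≤ β ^ q := Real.rpow_le_rpow_of_nonpos hβ0 hh1.le hq0
      have f2 : (1:ℝ) ≤ β ^ q :=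
        Real.one_le_rpow_of_pos_of_le_one_of_nonpos hβ0 hβ1.le hq0
      linarith
    have hfac0 : 0 ≤ 1 + h ^ q := by
      have := Real.rpow_nonneg hh0.le q; linarith
    have hrp0 : 0 ≤ (Real.cosh h - Real.cosh β) ^ p := Real.rpow_nonneg hcosh_pos.le _
    have hmul : (β * (h - β)) ^ p = β ^ p * (h - β) ^ p :=
      Real.mul_rpow hβ0.le hhb.le
    calc Real.exp (-(α * h)) * (1 + h ^ q) * (Real.cosh h - Real.cosh β) ^ p
        ≤ 1 * (2 * β ^ q) * (K * (β * (h - β)) ^ p) := by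
          refine mul_le_mul ?_ hrpow hrp0 (by positivity)
          exact mul_le_mul hexp hfac hfac0 (by norm_num)
      _ = D * (h - β) ^ p := by rw [hmul, hD_def]; ring
  -- apply monotonicity of the integral
  have hmono : (∫ h in Ioc β (2 * β),
      Real.exp (-(α * h)) * (1 + h ^ q) * (Real.cosh h - Real.cosh β) ^ p)
      ≤ ∫ h in Ioc β (2 * β), D * (h - β) ^ p := by
    apply integral_mono_of_nonneg
    · filter_upwards [ae_restrict_mem measurableSet_Ioc] with h hh
      obtain ⟨hh1, hh2⟩ := hh
      have hh0 : 0 < h := lt_trans hβ0 hh1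
      have hlow : β * (h - β) ≤ Real.cosh h - Real.cosh β := by
        rw [my_cosh_sub_cosh h β]
        have hs1 : 0 < (h + β)/2 := by linarith
        have hs2 : 0 < (h - β)/2 := by linarith
        have l1 : (h + β)/2 ≤ Real.sinh ((h + β)/2) := Real.self_le_sinh_iff.mpr hs1.le
        have l2 : (h - β)/2 ≤ Real.sinh ((h - β)/2) := Real.self_le_sinh_iff.mpr hs2.le
        nlinarith
      have hcosh_pos : 0 < Real.cosh h - Real.cosh β :=
        lt_of_lt_of_le (by nlinarith) hlow
      have h1 : 0 ≤ Real.exp (-(α * h)) := (Real.exp_pos _).le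
      have h2 : 0 ≤ 1 + h ^ q := by
        have := Real.rpow_nonneg hh0.le q; linarith
      have h3 : 0 ≤ (Real.cosh h - Real.cosh β) ^ p := Real.rpow_nonneg hcosh_pos.le _
      positivity
    · exact hInt
    · filter_upwards [ae_restrict_mem measurableSet_Ioc] with h hh
      exact hbound h hh
  -- compute the dominating integral
  have hval : (∫ h in Ioc β (2 * β), D * (h - β) ^ p) = D * (β ^ (p+1) / (p+1)) := by
    rw [MeasureTheory.integral_const_mul]
    congr 1
    rw [← intervalIntegral.integral_of_le hββ]
    have := intervalIntegral.integral_comp_sub_right (a := β) (b := 2*β)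
      (fun x : ℝ => x ^ p) β
    rw [this]
    have hsub1 : β - β = 0 := by ring
    have hsub2 : 2*β - β = β := by ring
    rw [hsub1, hsub2, integral_rpow (Or.inl hpneg1)]
    rw [Real.zero_rpow (by linarith : p + 1 ≠ 0)]
    ring
  -- final comparison
  have hβq : D * (β ^ (p+1) / (p+1)) ≤ (2 * K / (p+1)) * β ^ (-(2*ε)) := by
    have heq : D * (β ^ (p+1) / (p+1)) = (2*K/(p+1)) * β ^ (q + p + (p+1)) := by
      rw [Real.rpow_add hβ0 (q+p) (p+1), Real.rpow_add hβ0 q p, hD_def]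
      generalize β ^ q = A
      generalize β ^ p = B
      generalize β ^ (p+1) = Cc
      ring
    rw [heq]
    have hsplit : q + p + (p+1) = (((N:ℝ)-1)/2) + (-(2*ε)) := by
      simp only [hq_def, hp_def, hα]; ring
    rw [hsplit, Real.rpow_add hβ0]
    have h1 : β ^ (((N:ℝ)-1)/2) ≤ 1 :=
      Real.rpow_le_one hβ0.le hβ1.le (by linarith)
    have h2 : 0 ≤ β ^ (-(2*ε)) := Real.rpow_nonneg hβ0.le _
    have h3 : (0:ℝ) < 2*K/(p+1) := by positivity
    calc 2*K/(p+1) * (β ^ (((N:ℝ)-1)/2) * β ^ (-(2*ε)))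
        ≤ 2*K/(p+1) * (1 * β ^ (-(2*ε))) :=
          mul_le_mul_of_nonneg_left (mul_le_mul_of_nonneg_right h1 h2) h3.le
      _ = 2*K/(p+1) * β ^ (-(2*ε)) := by ring
  have hrhs : (2 * K / (p+1)) * β ^ (-(2*ε))
      ≤ (K * Real.exp 2 / (p + 1)) * (Real.cosh β - 1) ^ (-ε) := by
    -- cosh β - 1 ≤ (e/2) β² and cosh β - 1 > 0
    have hid : Real.cosh β - 1 = 2 * Real.sinh (β/2) * Real.sinh (β/2) := by
      have := my_cosh_sub_cosh β 0
      simpa using this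
    have hs : 0 < β/2 := by linarith
    have hsinh_pos : 0 < Real.sinh (β/2) := by
      have := Real.self_le_sinh_iff.mpr hs.le; linarith
    have hcb_pos : 0 < Real.cosh β - 1 := by rw [hid]; positivity
    have hsinh_up : Real.sinh (β/2) ≤ (β/2) * Real.exp 1 := by
      have h1 := my_sinh_le_mul_exp hs.le
      have h2 : Real.exp (β/2) ≤ Real.exp 1 := Real.exp_le_exp.mpr (by linarith)
      have h3 : (0:ℝ) < Real.exp (β/2) := Real.exp_pos _
      nlinarith
    have hcb_up : Real.cosh β - 1 ≤ (Real.exp 2 / 2) * β ^ (2:ℕ) := by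
      rw [hid]
      have he2 : Real.exp 1 * Real.exp 1 = Real.exp 2 := by
        rw [← Real.exp_add]; norm_num
      nlinarith [mul_self_le_mul_self hsinh_pos.le hsinh_up, he2,
        Real.exp_pos 1]
    -- hence (cosh β - 1)^(-ε) ≥ (e/2)^(-ε) β^(-2ε) ≥ (2/e) β^(-2ε)
    have step1 : ((Real.exp 2 / 2) * β ^ (2:ℕ)) ^ (-ε) ≤ (Real.cosh β - 1) ^ (-ε) :=
      Real.rpow_le_rpow_of_nonpos hcb_pos hcb_up (by linarith)
    have step2 : ((Real.exp 2 / 2) * β ^ (2:ℕ)) ^ (-ε)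
        = (Real.exp 2 / 2) ^ (-ε) * β ^ (-(2*ε)) := by
      rw [Real.mul_rpow (by positivity) (by positivity)]
      congr 1
      rw [← Real.rpow_natCast β 2, ← Real.rpow_mul hβ0.le]
      norm_num
    have he2 : (1:ℝ) ≤ Real.exp 2 / 2 ∨ Real.exp 2 / 2 < 1 := le_or_gt _ _
    have step3 : (2 / Real.exp 2) ≤ (Real.exp 2 / 2) ^ (-ε) := by
      have hbase : (1:ℝ) ≤ Real.exp 2 / 2 := by
        have := Real.add_one_le_exp (2:ℝ); linarith
      have := Real.rpow_le_rpow_of_exponent_le hbase (show -1 ≤ -ε by linarith)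
      have hneg1 : (Real.exp 2 / 2) ^ (-1:ℝ) = 2 / Real.exp 2 := by
        rw [Real.rpow_neg_one]
        field_simp
      linarith [hneg1 ▸ this]
    have hβe : 0 ≤ β ^ (-(2*ε)) := Real.rpow_nonneg hβ0.le _
    have key : (2 / Real.exp 2) * β ^ (-(2*ε)) ≤ (Real.cosh β - 1) ^ (-ε) := by
      calc (2 / Real.exp 2) * β ^ (-(2*ε))
          ≤ (Real.exp 2 / 2) ^ (-ε) * β ^ (-(2*ε)) :=
            mul_le_mul_of_nonneg_right step3 hβe
        _ = ((Real.exp 2 / 2) * β ^ (2:ℕ)) ^ (-ε) := step2.symm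
        _ ≤ (Real.cosh β - 1) ^ (-ε) := step1
    have hC0 : (0:ℝ) < K * Real.exp 2 / (p + 1) := by positivity
    have : (K * Real.exp 2 / (p + 1)) * ((2 / Real.exp 2) * β ^ (-(2*ε)))
        ≤ (K * Real.exp 2 / (p + 1)) * (Real.cosh β - 1) ^ (-ε) :=
      mul_le_mul_of_nonneg_left key hC0.le
    have heq : (K * Real.exp 2 / (p + 1)) * ((2 / Real.exp 2) * β ^ (-(2*ε)))
        = (2 * K / (p+1)) * β ^ (-(2*ε)) := by
      field_simp
    linarith [heq ▸ this]
  calc (∫ h in Ioc β (2 * β),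
          Real.exp (-(α * h)) * (1 + h ^ q) * (Real.cosh h - Real.cosh β) ^ p)
      ≤ ∫ h in Ioc β (2 * β), D * (h - β) ^ p := hmono
    _ = D * (β ^ (p+1) / (p+1)) := hval
    _ ≤ (2 * K / (p+1)) * β ^ (-(2*ε)) := hβq
    _ ≤ (K * Real.exp 2 / (p + 1)) * (Real.cosh β - 1) ^ (-ε) := hrhs
end

section
/- Let 1/2 < ε < 1 and let 0 < d < β₁. Then there exists a constant C = C(ε) > 0 independent of d and β₁ such that ∫_{d²}^{((β₁+d)/2)²} (β₁² − s)^{-1/2 - ε} (s − d²)^{-1/2} ds ≤ C (β₁² − d²)^{-ε}. -/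
open MeasureTheory Real Set

theorem G02_estimate (ε : ℝ) (hε1 : 1 / 2 < ε) (hε2 : ε < 1) :
    ∃ C > 0, ∀ β₁ d : ℝ, 0 < d → d < β₁ →
      (∫ s in Ioc (d ^ 2) (((β₁ + d) / 2) ^ 2),
          (β₁ ^ 2 - s) ^ (-(1 / 2) - ε) * (s - d ^ 2) ^ (-(1 / 2) : ℝ))
        ≤ C * (β₁ ^ 2 - d ^ 2) ^ (-ε) := by
  refine ⟨2 * (4 : ℝ) ^ ((1 : ℝ) / 2 + ε), by positivity, fun β₁ d hd hdb => ?_⟩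
  set b : ℝ := ((β₁ + d) / 2) ^ 2 with hb
  have hdm : d ^ 2 < b := by rw [hb]; nlinarith
  have hA : (0 : ℝ) < β₁ ^ 2 - d ^ 2 := by nlinarith
  have hquarter : (β₁ ^ 2 - d ^ 2) / 4 ≤ β₁ ^ 2 - b := by rw [hb]; nlinarith
  have hbA : b - d ^ 2 ≤ β₁ ^ 2 - d ^ 2 := by
    have : b < β₁ ^ 2 := by linarith [hquarter, hA]
    linarith
  set K : ℝ := (4 : ℝ) ^ ((1 : ℝ) / 2 + ε) * (β₁ ^ 2 - d ^ 2) ^ (-(1 / 2) - ε) with hK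
  have hKpos : 0 < K := by rw [hK]; positivity
  -- key pointwise bound and RHS integrability
  have hfint : IntegrableOn (fun s => (s - d ^ 2) ^ (-(1 / 2) : ℝ)) (Ioc (d ^ 2) b) := by
    rw [← intervalIntegrable_iff_integrableOn_Ioc_of_le hdm.le]
    have h1 : IntervalIntegrable (fun x : ℝ => x ^ (-(1 / 2) : ℝ)) volume 0 (b - d ^ 2) :=
      intervalIntegral.intervalIntegrable_rpow' (by norm_num)
    have h2 := h1.comp_sub_right (d ^ 2)
    simpa using h2
  have hgint : IntegrableOn (fun s => K * (s - d ^ 2) ^ (-(1 / 2) : ℝ)) (Ioc (d ^ 2) b) :=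
    hfint.const_mul K
  have hmono :
      (∫ s in Ioc (d ^ 2) b, (β₁ ^ 2 - s) ^ (-(1 / 2) - ε) * (s - d ^ 2) ^ (-(1 / 2) : ℝ))
        ≤ ∫ s in Ioc (d ^ 2) b, K * (s - d ^ 2) ^ (-(1 / 2) : ℝ) := by
    apply integral_mono_of_nonneg _ hgint
    · filter_upwards [ae_restrict_mem measurableSet_Ioc] with s hs
      have h2 : 0 < s - d ^ 2 := by linarith [hs.1]
      have hbs : β₁ ^ 2 - b ≤ β₁ ^ 2 - s := by linarith [hs.2]
      have h1 : (β₁ ^ 2 - s) ^ (-(1 / 2) - ε) ≤ K := by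
        have hstep : (β₁ ^ 2 - s) ^ (-(1 / 2) - ε)
            ≤ ((β₁ ^ 2 - d ^ 2) / 4) ^ (-(1 / 2) - ε) := by
          apply Real.rpow_le_rpow_of_nonpos (by positivity) (by linarith) (by linarith)
        have heq : ((β₁ ^ 2 - d ^ 2) / 4) ^ (-(1 / 2) - ε) = K := by
          rw [hK, Real.div_rpow hA.le (by norm_num), div_eq_mul_inv,
            ← Real.rpow_neg (by norm_num : (0:ℝ) ≤ 4),
            show (-(-(1 / 2) - ε) : ℝ) = 1 / 2 + ε by ring, mul_comm]
        linarith [heq ▸ hstep]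
      exact mul_le_mul_of_nonneg_right h1 (Real.rpow_nonneg h2.le _)
    · filter_upwards [ae_restrict_mem measurableSet_Ioc] with s hs
      have h1 : 0 < β₁ ^ 2 - s := by
        have := hs.2; linarith [hquarter, hA]
      have h2 : 0 < s - d ^ 2 := by linarith [hs.1]
      exact mul_nonneg (Real.rpow_nonneg h1.le _) (Real.rpow_nonneg h2.le _)
  have hval : (∫ s in Ioc (d ^ 2) b, (s - d ^ 2) ^ (-(1 / 2) : ℝ))
      = 2 * (b - d ^ 2) ^ ((1 : ℝ) / 2) := by
    rw [← intervalIntegral.integral_of_le hdm.le,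
      intervalIntegral.integral_comp_sub_right (fun u => u ^ (-(1 / 2) : ℝ)) (d ^ 2),
      sub_self, integral_rpow (Or.inl (by norm_num)),
      Real.zero_rpow (by norm_num)]
    norm_num
    ring
  have hKval : K * (2 * (b - d ^ 2) ^ ((1 : ℝ) / 2))
      ≤ 2 * (4 : ℝ) ^ ((1 : ℝ) / 2 + ε) * (β₁ ^ 2 - d ^ 2) ^ (-ε) := by
    have hs : (b - d ^ 2) ^ ((1 : ℝ) / 2) ≤ (β₁ ^ 2 - d ^ 2) ^ ((1 : ℝ) / 2) :=
      Real.rpow_le_rpow (by linarith) hbA (by norm_num)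
    have h2 : K * (2 * (b - d ^ 2) ^ ((1 : ℝ) / 2))
        ≤ K * (2 * (β₁ ^ 2 - d ^ 2) ^ ((1 : ℝ) / 2)) := by
      apply mul_le_mul_of_nonneg_left (by linarith) hKpos.le
    have h3 : K * (2 * (β₁ ^ 2 - d ^ 2) ^ ((1 : ℝ) / 2))
        = 2 * (4 : ℝ) ^ ((1 : ℝ) / 2 + ε) * (β₁ ^ 2 - d ^ 2) ^ (-ε) := by
      rw [hK]
      rw [show (2 : ℝ) * (4 : ℝ) ^ ((1 : ℝ) / 2 + ε) * (β₁ ^ 2 - d ^ 2) ^ (-ε)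
          = (4 : ℝ) ^ ((1 : ℝ) / 2 + ε) * ((β₁ ^ 2 - d ^ 2) ^ (-ε) * 2) by ring]
      rw [show (-ε : ℝ) = (-(1 / 2) - ε) + 1 / 2 by ring,
        Real.rpow_add hA]
      ring
    linarith
  calc (∫ s in Ioc (d ^ 2) b,
          (β₁ ^ 2 - s) ^ (-(1 / 2) - ε) * (s - d ^ 2) ^ (-(1 / 2) : ℝ))
      ≤ ∫ s in Ioc (d ^ 2) b, K * (s - d ^ 2) ^ (-(1 / 2) : ℝ) := hmono
    _ = K * ∫ s in Ioc (d ^ 2) b, (s - d ^ 2) ^ (-(1 / 2) : ℝ) := by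
          rw [MeasureTheory.integral_const_mul]
    _ = K * (2 * (b - d ^ 2) ^ ((1 : ℝ) / 2)) := by rw [hval]
    _ ≤ 2 * (4 : ℝ) ^ ((1 : ℝ) / 2 + ε) * (β₁ ^ 2 - d ^ 2) ^ (-ε) := hKval
end
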